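/- arXiv:gr-qc/9807082 — 2 statements merged into one kernel-verified Lean document; each statement's English description precedes it below -/
import Mathlib

section
/- For any two asymptotic translations v, w on the unit hyperboloid (i.e., solutions of D_a D_b v + v q_ab = 0), the quantity q^{ab} D_a v D_b w + v w is a constant function on the hyperboloid. -/
/-
Common extrinsic setup (used in all files).

We work in ℝ⁴ with the Minkowski inner product of signature (+,+,+,-) (CONTEXT 0).
`Hb` is the unit hyperboloid H = {x | ⟨x,x⟩ = 1}, `Ur` the open exterior region
{⟨x,x⟩ > 0} on which fields on H are represented (only their restriction to H matters,
since every intrinsic operator below first composes with the radial retraction `ret`,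
i.e. with the 0-homogeneous extension).

Standard facts about hypersurfaces give the following *definitions* of the intrinsic
(Levi-Civita) operators of the induced metric q on H in terms of ambient derivatives of
the 0-homogeneous extension:
 * the induced metric q at x ∈ H is the restriction of ⟨·,·⟩ to the tangent space
   {u | ⟨x,u⟩ = 0};
 * the intrinsic Hessian D_aD_b f on tangent vectors is the ambient Hessian of the
   0-homogeneous extension (the second-fundamental-form correction vanishes because the
   0-homogeneous extension has radial derivative 0);
 * the intrinsic gradient D^a f is the ambient Minkowski gradient of the 0-homogeneous
   extension (automatically tangent);
 * the intrinsic Laplacian D² f = q^{ab} D_aD_b f is the ambient wave operator applied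
   to the 0-homogeneous extension;
 * the intrinsic divergence D_a V^a of a tangent field is the ambient divergence of its
   0-homogeneous extension.
-/

noncomputable section

open scoped BigOperators

/-- ℝ⁴. -/
abbrev E4 : Type := Fin 4 → ℝ

/-- The signature (+,+,+,-). -/
def sg (i : Fin 4) : ℝ := if i = 3 then -1 else 1

/-- The Minkowski inner product ⟨x,y⟩ = x₀y₀ + x₁y₁ + x₂y₂ − x₃y₃. -/
def mk4 (x y : E4) : ℝ := ∑ i, sg i * x i * y i

/-- The unit hyperboloid H = {x | ⟨x,x⟩ = 1}. -/
def Hb : Set E4 := {x | mk4 x x = 1}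

/-- The exterior region {x | ⟨x,x⟩ > 0}. -/
def Ur : Set E4 := {x | 0 < mk4 x x}

/-- Radial retraction of the exterior region onto H. -/
def ret (x : E4) : E4 := (Real.sqrt (mk4 x x))⁻¹ • x

/-- 0-homogeneous extension of (the H-restriction of) a scalar field. -/
def Hz (f : E4 → ℝ) : E4 → ℝ := fun x => f (ret x)

/-- Standard basis of ℝ⁴. -/
def bas (i : Fin 4) : E4 := fun j => if j = i then 1 else 0

/-- Partial derivative ∂_i. -/
def pd (f : E4 → ℝ) (i : Fin 4) (x : E4) : ℝ := fderiv ℝ f x (bas i)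

/-- Ambient Minkowski gradient (index raised with the Minkowski metric). -/
def mgrad (f : E4 → ℝ) (x : E4) : E4 := fun i => sg i * pd f i x

/-- Intrinsic gradient D^a f on H. -/
def grH (f : E4 → ℝ) (x : E4) : E4 := mgrad (Hz f) x

/-- Ambient Minkowski wave operator □ = ∂² + ∂² + ∂² − ∂². -/
def boxm (f : E4 → ℝ) (x : E4) : ℝ := ∑ i, sg i * pd (pd f i) i x

/-- Intrinsic Laplacian D² f = q^{ab} D_a D_b f on H. -/
def D2H (f : E4 → ℝ) (x : E4) : ℝ := boxm (Hz f) x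

/-- 0-homogeneous extension of a vector field on H. -/
def HzV (V : E4 → E4) : E4 → E4 := fun x => V (ret x)

/-- Intrinsic divergence D_a V^a on H of a tangent vector field. -/
def divH (V : E4 → E4) (x : E4) : ℝ := ∑ i, fderiv ℝ (HzV V) x (bas i) i

/-- `u` is tangent to H at `x`. -/
def Tang (x u : E4) : Prop := mk4 x u = 0

/-- Intrinsic Hessian D_a D_b f on H, evaluated on (tangent) vectors u, v. -/
def HessH (f : E4 → ℝ) (x u v : E4) : ℝ :=
  fderiv ℝ (fun y => fderiv ℝ (Hz f) y v) x u

/-- The linear field α_k = ⟨k,·⟩; its restriction to H is an asymptotic translation. -/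
def trfn (k : E4) : E4 → ℝ := fun x => mk4 k x

/-- `f` (restricted to H) is an asymptotic translation: D_a D_b f + f q_ab = 0. -/
def IsATrans (f : E4 → ℝ) : Prop :=
  ContDiffOn ℝ (⊤ : ℕ∞) f Ur ∧
  ∀ x ∈ Hb, ∀ u v : E4, Tang x u → Tang x v →
    HessH f x u v + f x * mk4 u v = 0

/-
STATEMENT 1: For asymptotic translations v, w on H, the quantity
q^{ab} D_a v D_b w + v w  (= ⟨D^av, D^aw⟩ + vw, the gradients being tangent)
is constant on H.
-/
section AuxLemmas

lemma sg_sq (i : Fin 4) : sg i * sg i = 1 := by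
  by_cases h : i = 3 <;> simp [sg, h]

lemma mk4_comm (x y : E4) : mk4 x y = mk4 y x := by
  unfold mk4; exact Finset.sum_congr rfl (by intros; ring)

lemma mk4_smul_left (t : ℝ) (x y : E4) : mk4 (t • x) y = t * mk4 x y := by
  unfold mk4; rw [Finset.mul_sum]
  exact Finset.sum_congr rfl (by intros; simp [smul_eq_mul]; ring)

lemma mk4_smul_right (t : ℝ) (x y : E4) : mk4 x (t • y) = t * mk4 x y := by
  rw [mk4_comm, mk4_smul_left, mk4_comm]

lemma mk4_sub_right (x u v : E4) : mk4 x (u - v) = mk4 x u - mk4 x v := by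
  unfold mk4; rw [← Finset.sum_sub_distrib]
  exact Finset.sum_congr rfl (by intros; simp [Pi.sub_apply]; ring)

lemma eq_sum_bas (u : E4) : u = ∑ i, u i • bas i := by
  funext j
  simp [bas, Finset.sum_apply, Pi.smul_apply, smul_eq_mul]

lemma clm_eval (L : E4 →L[ℝ] ℝ) (u : E4) : L u = ∑ i, u i * L (bas i) := by
  conv_lhs => rw [eq_sum_bas u]
  rw [map_sum]
  exact Finset.sum_congr rfl (by intros; simp)

/-- The quadratic form. -/
def Qf (x : E4) : ℝ := mk4 x x

lemma contDiff_Qf {n : WithTop ℕ∞} : ContDiff ℝ n Qf := by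
  unfold Qf mk4
  exact ContDiff.sum fun i _ =>
    (contDiff_const.mul (contDiff_apply ℝ ℝ i)).mul
      (contDiff_apply ℝ ℝ i)

lemma isOpen_Ur : IsOpen Ur :=
  isOpen_lt continuous_const (contDiff_Qf (n:=1)).continuous

lemma Hb_subset_Ur : Hb ⊆ Ur := by
  intro x hx
  simp only [Hb, Set.mem_setOf_eq] at hx
  simp only [Ur, Set.mem_setOf_eq, hx]
  norm_num

lemma Qf_smul (t : ℝ) (x : E4) : Qf (t • x) = t ^ 2 * Qf x := by
  unfold Qf; rw [mk4_smul_left, mk4_smul_right]; ring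

lemma ret_mem_Hb {x : E4} (hx : x ∈ Ur) : ret x ∈ Hb := by
  have hq : 0 < mk4 x x := hx
  have hs : Real.sqrt (mk4 x x) ≠ 0 := ne_of_gt (Real.sqrt_pos.2 hq)
  simp only [Hb, Set.mem_setOf_eq, ret, mk4_smul_left, mk4_smul_right]
  rw [← mul_assoc, ← mul_inv]
  rw [Real.mul_self_sqrt hq.le]
  field_simp

lemma ret_of_Hb {x : E4} (hx : x ∈ Hb) : ret x = x := by
  have : mk4 x x = 1 := hx
  simp [ret, this]

lemma smul_mem_Ur {x : E4} (hx : x ∈ Ur) {t : ℝ} (ht : t ≠ 0) : t • x ∈ Ur := by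
  have hq : 0 < mk4 x x := hx
  have h2 : (0:ℝ) < t * (t * mk4 x x) := by
    have h3 : t * (t * mk4 x x) = t ^ 2 * mk4 x x := by ring
    rw [h3]
    have h4 : (0:ℝ) < t ^ 2 := by positivity
    positivity
  simpa [Ur, Set.mem_setOf_eq, mk4_smul_left, mk4_smul_right, mul_assoc] using h2

lemma ret_smul {x : E4} (hx : x ∈ Ur) {t : ℝ} (ht : 0 < t) : ret (t • x) = ret x := by
  have hq : 0 < mk4 x x := hx
  unfold ret
  have : mk4 (t • x) (t • x) = t ^ 2 * mk4 x x := Qf_smul t x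
  rw [this, Real.sqrt_mul (by positivity), Real.sqrt_sq ht.le]
  rw [smul_smul, mul_inv]
  congr 1
  field_simp

lemma contDiffAt_ret {n : WithTop ℕ∞} {x : E4} (hx : x ∈ Ur) : ContDiffAt ℝ n ret x := by
  have hq : 0 < mk4 x x := hx
  have h1 : ContDiffAt ℝ n Qf x := contDiff_Qf.contDiffAt
  have h2 : ContDiffAt ℝ n (fun y => Real.sqrt (Qf y)) x :=
    h1.sqrt (ne_of_gt hq)
  have h3 : ContDiffAt ℝ n (fun y => (Real.sqrt (Qf y))⁻¹) x :=
    h2.inv (ne_of_gt (Real.sqrt_pos.2 hq))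
  exact h3.smul contDiffAt_id

lemma contDiffAt_Hz {n : WithTop ℕ∞} {f : E4 → ℝ} (hf : ContDiffOn ℝ n f Ur) {x : E4}
    (hx : x ∈ Ur) : ContDiffAt ℝ n (Hz f) x := by
  have hr : ret x ∈ Ur := Hb_subset_Ur (ret_mem_Hb hx)
  have hf' : ContDiffAt ℝ n f (ret x) := hf.contDiffAt (isOpen_Ur.mem_nhds hr)
  exact hf'.comp x (contDiffAt_ret hx)

lemma Hz_smul {f : E4 → ℝ} {x : E4} (hx : x ∈ Ur) {t : ℝ} (ht : 0 < t) :
    Hz f (t • x) = Hz f x := by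
  unfold Hz; rw [ret_smul hx ht]

end AuxLemmas
section Scaling

lemma hasDerivAt_smul_vec (x : E4) (t : ℝ) : HasDerivAt (fun s : ℝ => s • x) x t := by
  simpa using (hasDerivAt_id t).smul_const x

/-- Euler-type lemma: radial derivative from radial behaviour. -/
lemma fderiv_radial {F : E4 → ℝ} {x : E4}
    (hF : DifferentiableAt ℝ F x) {ψ : ℝ → ℝ} {d : ℝ}
    (hψ : HasDerivAt ψ d 1)
    (h : ∀ t : ℝ, 0 < t → F (t • x) = ψ t) :
    fderiv ℝ F x x = d := by
  have h1 : HasDerivAt (fun t : ℝ => F (t • x)) (fderiv ℝ F x x) 1 := by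
    have hF' : HasFDerivAt F (fderiv ℝ F x) ((1:ℝ) • x) := by
      simpa using hF.hasFDerivAt
    have h0 := hF'.comp_hasDerivAt (1:ℝ) (hasDerivAt_smul_vec x 1)
    simpa [Function.comp_def] using h0
  have h2 : HasDerivAt (fun t : ℝ => F (t • x)) d 1 := by
    apply hψ.congr_of_eventuallyEq
    filter_upwards [eventually_gt_nhds zero_lt_one] with t ht
    exact h t ht
  exact h1.unique h2

lemma smul_clm_hasFDerivAt (t : ℝ) (x : E4) :
    HasFDerivAt (fun y : E4 => t • y) (t • ContinuousLinearMap.id ℝ E4) x := by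
  simpa using (t • ContinuousLinearMap.id ℝ E4).hasFDerivAt (x := x)

/-- Scaling of the derivative of a 0-homogeneous function on Ur. -/
lemma fderiv_scal {F : E4 → ℝ} (hdiff : ∀ y ∈ Ur, DifferentiableAt ℝ F y)
    (hhom : ∀ y ∈ Ur, ∀ t : ℝ, 0 < t → F (t • y) = F y)
    {x : E4} (hx : x ∈ Ur) {t : ℝ} (ht : 0 < t) (u : E4) :
    fderiv ℝ F (t • x) u = t⁻¹ * fderiv ℝ F x u := by
  have hev : (fun y => F (t • y)) =ᶠ[nhds x] F := by
    filter_upwards [isOpen_Ur.mem_nhds hx] with y hy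
    exact hhom y hy t ht
  have h1 : HasFDerivAt (fun y => F (t • y))
      ((fderiv ℝ F (t • x)).comp (t • ContinuousLinearMap.id ℝ E4)) x := by
    have := ((hdiff _ (smul_mem_Ur hx ht.ne')).hasFDerivAt).comp x (smul_clm_hasFDerivAt t x)
    simpa [Function.comp_def] using this
  have e1 : fderiv ℝ (fun y => F (t • y)) x
      = (fderiv ℝ F (t • x)).comp (t • ContinuousLinearMap.id ℝ E4) := h1.fderiv
  have e2 : fderiv ℝ (fun y => F (t • y)) x = fderiv ℝ F x := hev.fderiv_eq
  have e3 : fderiv ℝ F x u = t * fderiv ℝ F (t • x) u := by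
    conv_lhs => rw [← e2, e1]
    simp [ContinuousLinearMap.comp_apply, map_smul]
  rw [e3]
  field_simp

end Scaling
section Hess

lemma diffAt_Hz {f : E4 → ℝ} (hf : ContDiffOn ℝ (⊤ : ℕ∞) f Ur) {x : E4} (hx : x ∈ Ur) :
    DifferentiableAt ℝ (Hz f) x :=
  (contDiffAt_Hz (n := 1) (hf.of_le (by simp)) hx).differentiableAt one_ne_zero

lemma diffAt_fderiv_Hz {f : E4 → ℝ} (hf : ContDiffOn ℝ (⊤ : ℕ∞) f Ur) {x : E4} (hx : x ∈ Ur) :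
    DifferentiableAt ℝ (fderiv ℝ (Hz f)) x := by
  have h2 : ContDiffAt ℝ 2 (Hz f) x := contDiffAt_Hz (hf.of_le (by exact WithTop.coe_le_coe.2 (le_top : (2:ℕ∞) ≤ ⊤))) hx
  have h1 := h2.fderiv_right (m := 1) (by norm_num)
  exact h1.differentiableAt one_ne_zero

/-- The map y ↦ (fderiv (Hz f) y) V has the expected derivative. -/
lemma hasFDerivAt_phi {f : E4 → ℝ} (hf : ContDiffOn ℝ (⊤ : ℕ∞) f Ur) {x : E4} (hx : x ∈ Ur)
    (V : E4) :
    HasFDerivAt (fun y => fderiv ℝ (Hz f) y V)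
      ((ContinuousLinearMap.apply ℝ ℝ V).comp (fderiv ℝ (fderiv ℝ (Hz f)) x)) x := by
  have h := ((diffAt_fderiv_Hz hf hx).hasFDerivAt)
  have h2 := (ContinuousLinearMap.apply ℝ ℝ V).hasFDerivAt.comp x h
  simpa [Function.comp_def] using h2

lemma hessH_eq {f : E4 → ℝ} (hf : ContDiffOn ℝ (⊤ : ℕ∞) f Ur) {x : E4} (hx : x ∈ Ur) (u V : E4) :
    HessH f x u V = (fderiv ℝ (fderiv ℝ (Hz f)) x u) V := by
  unfold HessH
  rw [(hasFDerivAt_phi hf hx V).fderiv]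
  rfl

/-- 0-homogeneous Euler identity for Hz f. -/
lemma euler0 {f : E4 → ℝ} (hf : ContDiffOn ℝ (⊤ : ℕ∞) f Ur) {x : E4} (hx : x ∈ Ur) :
    fderiv ℝ (Hz f) x x = 0 :=
  fderiv_radial (diffAt_Hz hf hx) (hasDerivAt_const 1 (Hz f x))
    (fun t ht => Hz_smul hx ht)

/-- Scaling of first derivative of Hz f. -/
lemma fderiv_Hz_scal {f : E4 → ℝ} (hf : ContDiffOn ℝ (⊤ : ℕ∞) f Ur) {x : E4} (hx : x ∈ Ur)
    {t : ℝ} (ht : 0 < t) (u : E4) :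
    fderiv ℝ (Hz f) (t • x) u = t⁻¹ * fderiv ℝ (Hz f) x u :=
  fderiv_scal (fun y hy => diffAt_Hz hf hy) (fun y hy t' ht' => Hz_smul hy ht') hx ht u

/-- (-1)-homogeneous Euler identity for derivatives of Hz f:
    second derivative with two radial slots... actually (Hess x) V = - fderiv V. -/
lemma euler_neg {f : E4 → ℝ} (hf : ContDiffOn ℝ (⊤ : ℕ∞) f Ur) {x : E4} (hx : x ∈ Ur) (V : E4) :
    (fderiv ℝ (fderiv ℝ (Hz f)) x x) V = - fderiv ℝ (Hz f) x V := by
  have hdiff : DifferentiableAt ℝ (fun y => fderiv ℝ (Hz f) y V) x :=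
    (hasFDerivAt_phi hf hx V).differentiableAt
  have hψ : HasDerivAt (fun t : ℝ => t⁻¹ * fderiv ℝ (Hz f) x V)
      (- fderiv ℝ (Hz f) x V) 1 := by
    have := (hasDerivAt_inv (one_ne_zero)).mul_const (fderiv ℝ (Hz f) x V)
    simpa using this
  have he : fderiv ℝ (fun y => fderiv ℝ (Hz f) y V) x x = - fderiv ℝ (Hz f) x V :=
    fderiv_radial hdiff hψ (fun t ht => fderiv_Hz_scal hf hx ht V)
  rw [← he, (hasFDerivAt_phi hf hx V).fderiv]
  rfl

end Hess
section BG

/-- q^{ab} D_a v D_b w as an ambient expression. -/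
def Bf (v w : E4 → ℝ) (y : E4) : ℝ :=
  ∑ i, sg i * fderiv ℝ (Hz v) y (bas i) * fderiv ℝ (Hz w) y (bas i)

/-- The globalized (0-homogeneous) version of the conserved quantity. -/
def Gf (v w : E4 → ℝ) (y : E4) : ℝ := Qf y * Bf v w y + Hz v y * Hz w y

lemma hasFDerivAt_Qf (x : E4) :
    ∃ L : E4 →L[ℝ] ℝ, HasFDerivAt Qf L x ∧ ∀ u, L u = 2 * mk4 x u := by
  have hQ := HasFDerivAt.sum (fun (i : Fin 4) (_ : i ∈ Finset.univ) =>
      (((ContinuousLinearMap.proj (R := ℝ) (φ := fun _ : Fin 4 => ℝ) i).hasFDerivAt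
          (x := x)).const_mul (sg i)).mul
        ((ContinuousLinearMap.proj (R := ℝ) (φ := fun _ : Fin 4 => ℝ) i).hasFDerivAt (x := x)))
  refine ⟨_, hQ, fun u => ?_⟩
  simp only [ContinuousLinearMap.coe_sum', Finset.sum_apply, ContinuousLinearMap.add_apply,
    ContinuousLinearMap.smul_apply, ContinuousLinearMap.proj_apply, smul_eq_mul, mk4,
    Finset.mul_sum]
  exact Finset.sum_congr rfl (by intros; ring)

lemma hasFDerivAt_Bf {v w : E4 → ℝ} (hv1 : ContDiffOn ℝ (⊤ : ℕ∞) v Ur) (hw1 : ContDiffOn ℝ (⊤ : ℕ∞) w Ur)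
    {x : E4} (hx : x ∈ Ur) :
    ∃ L : E4 →L[ℝ] ℝ, HasFDerivAt (Bf v w) L x ∧ ∀ u, L u =
      ∑ i, sg i * (fderiv ℝ (Hz v) x (bas i) * ((fderiv ℝ (fderiv ℝ (Hz w)) x u) (bas i))
        + fderiv ℝ (Hz w) x (bas i) * ((fderiv ℝ (fderiv ℝ (Hz v)) x u) (bas i))) := by
  have hB := HasFDerivAt.sum (fun (i : Fin 4) (_ : i ∈ Finset.univ) =>
      (((hasFDerivAt_phi hv1 hx (bas i)).const_mul (sg i)).mul (hasFDerivAt_phi hw1 hx (bas i))))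
  refine ⟨_, hB, fun u => ?_⟩
  simp only [ContinuousLinearMap.coe_sum', Finset.sum_apply, ContinuousLinearMap.add_apply,
    ContinuousLinearMap.smul_apply, ContinuousLinearMap.comp_apply,
    ContinuousLinearMap.apply_apply, smul_eq_mul]
  exact Finset.sum_congr rfl (by intros; ring)

lemma hasFDerivAt_Gf {v w : E4 → ℝ} (hv1 : ContDiffOn ℝ (⊤ : ℕ∞) v Ur) (hw1 : ContDiffOn ℝ (⊤ : ℕ∞) w Ur)
    {x : E4} (hx : x ∈ Ur) :
    ∃ L : E4 →L[ℝ] ℝ, HasFDerivAt (Gf v w) L x ∧ ∀ u, L u =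
      2 * mk4 x u * Bf v w x
      + Qf x * (∑ i, sg i *
          (fderiv ℝ (Hz v) x (bas i) * ((fderiv ℝ (fderiv ℝ (Hz w)) x u) (bas i))
          + fderiv ℝ (Hz w) x (bas i) * ((fderiv ℝ (fderiv ℝ (Hz v)) x u) (bas i))))
      + (Hz v x * fderiv ℝ (Hz w) x u + Hz w x * fderiv ℝ (Hz v) x u) := by
  obtain ⟨LQ, hLQ, eLQ⟩ := hasFDerivAt_Qf x
  obtain ⟨LB, hLB, eLB⟩ := hasFDerivAt_Bf hv1 hw1 hx
  have hg := (diffAt_Hz hv1 hx).hasFDerivAt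
  have hh := (diffAt_Hz hw1 hx).hasFDerivAt
  refine ⟨_, (hLQ.mul hLB).add (hg.mul hh), fun u => ?_⟩
  simp only [ContinuousLinearMap.add_apply, ContinuousLinearMap.smul_apply, smul_eq_mul]
  rw [eLQ u, eLB u]
  ring

end BG
section Key

lemma Hz_eq_on_Hb {f : E4 → ℝ} {x : E4} (hx : x ∈ Hb) : Hz f x = f x := by
  unfold Hz; rw [ret_of_Hb hx]

lemma mk4_grH {f : E4 → ℝ} (x u : E4) :
    mk4 u (grH f x) = fderiv ℝ (Hz f) x u := by
  unfold grH mgrad pd mk4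
  rw [clm_eval (fderiv ℝ (Hz f) x) u]
  refine Finset.sum_congr rfl (fun i _ => ?_)
  rw [show sg i * u i * (sg i * fderiv ℝ (Hz f) x (bas i))
      = (sg i * sg i) * (u i * fderiv ℝ (Hz f) x (bas i)) by ring, sg_sq i, one_mul]

lemma clm_grH {f : E4 → ℝ} (L : E4 →L[ℝ] ℝ) (x : E4) :
    L (grH f x) = ∑ i, sg i * fderiv ℝ (Hz f) x (bas i) * L (bas i) := by
  rw [clm_eval L (grH f x)]
  exact Finset.sum_congr rfl (fun i _ => by unfold grH mgrad pd; ring)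

lemma tang_grH {f : E4 → ℝ} (hf : ContDiffOn ℝ (⊤ : ℕ∞) f Ur) {x : E4} (hx : x ∈ Ur) :
    Tang x (grH f x) := by
  unfold Tang
  rw [mk4_grH, euler0 hf hx]

lemma fderiv_Gf_zero_Hb {v w : E4 → ℝ} (hv : IsATrans v) (hw : IsATrans w)
    {x : E4} (hxH : x ∈ Hb) : fderiv ℝ (Gf v w) x = 0 := by
  have hx : x ∈ Ur := Hb_subset_Ur hxH
  have hQ1 : mk4 x x = 1 := hxH
  obtain ⟨L, hL, eL⟩ := hasFDerivAt_Gf hv.1 hw.1 hx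
  rw [hL.fderiv]
  have hgx : fderiv ℝ (Hz v) x x = 0 := euler0 hv.1 hx
  have hhx : fderiv ℝ (Hz w) x x = 0 := euler0 hw.1 hx
  have hgv : Hz v x = v x := Hz_eq_on_Hb hxH
  have hhw : Hz w x = w x := Hz_eq_on_Hb hxH
  have hQfx : Qf x = 1 := hQ1
  -- rewrite the sum in eL
  have sum_eq : ∀ u : E4, (∑ i, sg i *
        (fderiv ℝ (Hz v) x (bas i) * ((fderiv ℝ (fderiv ℝ (Hz w)) x u) (bas i))
        + fderiv ℝ (Hz w) x (bas i) * ((fderiv ℝ (fderiv ℝ (Hz v)) x u) (bas i))))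
      = (fderiv ℝ (fderiv ℝ (Hz w)) x u) (grH v x)
        + (fderiv ℝ (fderiv ℝ (Hz v)) x u) (grH w x) := by
    intro u
    rw [clm_grH (fderiv ℝ (fderiv ℝ (Hz w)) x u) x,
        clm_grH (fderiv ℝ (fderiv ℝ (Hz v)) x u) x, ← Finset.sum_add_distrib]
    exact Finset.sum_congr rfl (fun i _ => by ring)
  -- tangent directions
  have key_tang : ∀ u : E4, Tang x u → L u = 0 := by
    intro u htu
    have h1 : HessH w x u (grH v x) + w x * mk4 u (grH v x) = 0 :=
      hw.2 x hxH u (grH v x) htu (tang_grH hv.1 hx)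
    have h2 : HessH v x u (grH w x) + v x * mk4 u (grH w x) = 0 :=
      hv.2 x hxH u (grH w x) htu (tang_grH hw.1 hx)
    rw [hessH_eq hw.1 hx, mk4_grH] at h1
    rw [hessH_eq hv.1 hx, mk4_grH] at h2
    have htu' : mk4 x u = 0 := htu
    rw [eL u, sum_eq u, hQfx, htu', hgv, hhw]
    nlinarith [h1, h2]
  -- radial direction
  have key_rad : L x = 0 := by
    have e1 : (fderiv ℝ (fderiv ℝ (Hz w)) x x) (grH v x)
        = - fderiv ℝ (Hz w) x (grH v x) := euler_neg hw.1 hx (grH v x)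
    have e2 : (fderiv ℝ (fderiv ℝ (Hz v)) x x) (grH w x)
        = - fderiv ℝ (Hz v) x (grH w x) := euler_neg hv.1 hx (grH w x)
    have e3 : fderiv ℝ (Hz w) x (grH v x) = Bf v w x := by
      unfold Bf
      rw [clm_grH (fderiv ℝ (Hz w) x) x]
    have e4 : fderiv ℝ (Hz v) x (grH w x) = Bf v w x := by
      unfold Bf
      rw [clm_grH (fderiv ℝ (Hz v) x) x]
      exact Finset.sum_congr rfl (fun i _ => by ring)
    rw [eL x, sum_eq x, hQfx, hQ1, e1, e2, e3, e4, hgx, hhx]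
    unfold Bf
    ring
  -- general direction
  ext u
  have htang : Tang x (u - mk4 x u • x) := by
    unfold Tang
    rw [mk4_sub_right, mk4_smul_right, hQ1]
    ring
  have := key_tang (u - mk4 x u • x) htang
  rw [map_sub, map_smul] at this
  rw [ContinuousLinearMap.zero_apply]
  rw [key_rad] at this
  simpa using this

end Key
section Final

lemma mk4_expand (x y : E4) :
    mk4 x y = x 0 * y 0 + x 1 * y 1 + x 2 * y 2 - x 3 * y 3 := by
  simp [mk4, Fin.sum_univ_four, sg]
  ring

lemma Bf_smul {v w : E4 → ℝ} (hv1 : ContDiffOn ℝ (⊤ : ℕ∞) v Ur) (hw1 : ContDiffOn ℝ (⊤ : ℕ∞) w Ur)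
    {x : E4} (hx : x ∈ Ur) {t : ℝ} (ht : 0 < t) :
    Bf v w (t • x) = t⁻¹ * (t⁻¹ * Bf v w x) := by
  unfold Bf
  rw [Finset.mul_sum, Finset.mul_sum]
  refine Finset.sum_congr rfl fun i _ => ?_
  rw [fderiv_Hz_scal hv1 hx ht, fderiv_Hz_scal hw1 hx ht]
  ring

lemma Gf_smul {v w : E4 → ℝ} (hv1 : ContDiffOn ℝ (⊤ : ℕ∞) v Ur) (hw1 : ContDiffOn ℝ (⊤ : ℕ∞) w Ur)
    {x : E4} (hx : x ∈ Ur) {t : ℝ} (ht : 0 < t) :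
    Gf v w (t • x) = Gf v w x := by
  unfold Gf
  rw [Qf_smul, Bf_smul hv1 hw1 hx ht, Hz_smul hx ht, Hz_smul (f := w) hx ht]
  have ht' : t ≠ 0 := ht.ne'
  field_simp

lemma diffAt_Gf {v w : E4 → ℝ} (hv1 : ContDiffOn ℝ (⊤ : ℕ∞) v Ur) (hw1 : ContDiffOn ℝ (⊤ : ℕ∞) w Ur)
    {x : E4} (hx : x ∈ Ur) : DifferentiableAt ℝ (Gf v w) x := by
  obtain ⟨L, hL, _⟩ := hasFDerivAt_Gf hv1 hw1 hx
  exact hL.differentiableAt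

lemma fderiv_Gf_zero_Ur {v w : E4 → ℝ} (hv : IsATrans v) (hw : IsATrans w)
    {y : E4} (hy : y ∈ Ur) : fderiv ℝ (Gf v w) y = 0 := by
  have hq : 0 < mk4 y y := hy
  set t := Real.sqrt (mk4 y y) with htdef
  have ht : 0 < t := Real.sqrt_pos.2 hq
  have hr : ret y ∈ Ur := Hb_subset_Ur (ret_mem_Hb hy)
  have hyy : t • ret y = y := by
    unfold ret
    rw [smul_smul, mul_inv_cancel₀ ht.ne', one_smul]
  ext u
  have hs := fderiv_scal (F := Gf v w) (fun z hz => diffAt_Gf hv.1 hw.1 hz)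
    (fun z hz s hs => Gf_smul hv.1 hw.1 hz hs) hr ht u
  rw [hyy] at hs
  rw [hs, fderiv_Gf_zero_Hb hv hw (ret_mem_Hb hy)]
  simp

/-- The parametrization of Ur. -/
def pmap (p : (Fin 3 → ℝ) × ℝ) : E4 := fun j =>
  if h : (j : ℕ) < 3 then p.1 ⟨j, h⟩ else p.2 * Real.sqrt (∑ i, p.1 i ^ 2)

lemma continuous_pmap : Continuous pmap := by
  refine continuous_pi fun j => ?_
  by_cases h : (j : ℕ) < 3
  · simp only [pmap, dif_pos h]
    exact (continuous_apply _).comp continuous_fst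
  · simp only [pmap, dif_neg h]
    exact continuous_snd.mul (Real.continuous_sqrt.comp
      (continuous_finset_sum _ fun i _ => ((continuous_apply i).comp continuous_fst).pow 2))

lemma Ur_eq_image :
    Ur = pmap '' (({s : Fin 3 → ℝ | s ≠ 0}) ×ˢ Set.Ioo (-1 : ℝ) 1) := by
  ext x
  constructor
  · intro hx
    have hq : 0 < mk4 x x := hx
    rw [mk4_expand] at hq
    set s : Fin 3 → ℝ := ![x 0, x 1, x 2] with hsdef
    have hsum : (∑ i, s i ^ 2) = x 0 * x 0 + x 1 * x 1 + x 2 * x 2 := by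
      simp [Fin.sum_univ_three, hsdef]
      ring
    have hρ : 0 < ∑ i, s i ^ 2 := by rw [hsum]; nlinarith [sq_nonneg (x 3)]
    set r := Real.sqrt (∑ i, s i ^ 2) with hrdef
    have hr : 0 < r := Real.sqrt_pos.2 hρ
    have hr2 : r ^ 2 = ∑ i, s i ^ 2 := Real.sq_sqrt hρ.le
    have hx3 : x 3 * x 3 < r ^ 2 := by rw [hr2, hsum]; nlinarith
    refine ⟨(s, x 3 / r), ⟨?_, ?_, ?_⟩, ?_⟩
    · intro h0
      have h0' : s = 0 := h0
      rw [h0'] at hρ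
      simp at hρ
    · rw [neg_lt, ← neg_div]
      rw [div_lt_one hr]
      nlinarith
    · rw [div_lt_one hr]
      nlinarith
    · funext j
      fin_cases j
      · simp [pmap, hsdef]
      · simp [pmap, hsdef]
      · simp [pmap, hsdef]
      · show (x 3 / r) * r = x 3
        field_simp
  · rintro ⟨⟨s, u⟩, ⟨hs, hu1, hu2⟩, rfl⟩
    have hρ : 0 < ∑ i, s i ^ 2 := by
      rcases Function.ne_iff.1 hs with ⟨i, hi⟩
      exact Finset.sum_pos' (fun j _ => sq_nonneg _) ⟨i, Finset.mem_univ i, pow_two_pos_of_ne_zero hi⟩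
    show 0 < mk4 (pmap (s, u)) (pmap (s, u))
    rw [mk4_expand]
    have h3 : pmap (s, u) 3 = u * Real.sqrt (∑ i, s i ^ 2) := rfl
    have h0 : pmap (s, u) 0 = s 0 := rfl
    have h1 : pmap (s, u) 1 = s 1 := rfl
    have h2 : pmap (s, u) 2 = s 2 := rfl
    rw [h0, h1, h2, h3]
    have hsq : Real.sqrt (∑ i, s i ^ 2) ^ 2 = ∑ i, s i ^ 2 := Real.sq_sqrt hρ.le
    have hsum : (∑ i, s i ^ 2) = s 0 ^ 2 + s 1 ^ 2 + s 2 ^ 2 := by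
      simp [Fin.sum_univ_three]
    have hu : u ^ 2 < 1 := by nlinarith
    nlinarith [hsq, hsum, hρ]

lemma isPreconnected_Ur : IsPreconnected Ur := by
  rw [Ur_eq_image]
  have h1 : IsConnected ({s : Fin 3 → ℝ | s ≠ 0}) := by
    have : ({s : Fin 3 → ℝ | s ≠ 0}) = ({0}ᶜ : Set (Fin 3 → ℝ)) := by
      ext s; simp
    rw [this]
    refine isConnected_compl_singleton_of_one_lt_rank ?_ 0
    rw [rank_fin_fun]
    norm_num
  have h2 : IsConnected (Set.Ioo (-1 : ℝ) 1) := isConnected_Ioo (by norm_num)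
  exact ((h1.prod h2).image pmap continuous_pmap.continuousOn).isPreconnected

lemma Gf_const {v w : E4 → ℝ} (hv : IsATrans v) (hw : IsATrans w)
    {x y : E4} (hx : x ∈ Ur) (hy : y ∈ Ur) : Gf v w x = Gf v w y := by
  haveI : PreconnectedSpace Ur := Subtype.preconnectedSpace isPreconnected_Ur
  have hloc : IsLocallyConstant (fun z : Ur => Gf v w z.val) := by
    rw [IsLocallyConstant.iff_eventually_eq]
    intro z
    obtain ⟨ε, hε, hball⟩ := Metric.isOpen_iff.1 isOpen_Ur z.val z.2
    have hmem : Metric.ball z.val ε ∈ nhds z.val := Metric.ball_mem_nhds _ hε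
    have hev : ∀ᶠ (y : Ur) in nhds z, (y : E4) ∈ Metric.ball z.val ε :=
      (continuous_subtype_val.continuousAt (x := z)).preimage_mem_nhds hmem
    filter_upwards [hev] with y hy
    refine (convex_ball z.val ε).is_const_of_fderivWithin_eq_zero (𝕜 := ℝ)
      (fun p hp => (diffAt_Gf hv.1 hw.1 (hball hp)).differentiableWithinAt) ?_ hy
      (Metric.mem_ball_self hε)
    intro p hp
    rw [fderivWithin_of_mem_nhds ((Metric.isOpen_ball).mem_nhds hp)]
    exact fderiv_Gf_zero_Ur hv hw (hball hp)
  exact hloc.apply_eq_of_preconnectedSpace ⟨x, hx⟩ ⟨y, hy⟩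

lemma mk4_grH_grH {v w : E4 → ℝ} (x : E4) :
    mk4 (grH v x) (grH w x) = Bf v w x := by
  unfold Bf grH mgrad pd mk4
  refine Finset.sum_congr rfl fun i _ => ?_
  rw [show sg i * (sg i * fderiv ℝ (Hz v) x (bas i)) * (sg i * fderiv ℝ (Hz w) x (bas i))
      = (sg i * sg i) * (sg i * fderiv ℝ (Hz v) x (bas i) * fderiv ℝ (Hz w) x (bas i)) by ring,
    sg_sq i, one_mul]

lemma bas0_mem_Hb : bas 0 ∈ Hb := by
  show mk4 (bas 0) (bas 0) = 1
  rw [mk4_expand]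
  simp [bas, Fin.ext_iff]

end Final
theorem stmt1 (v w : E4 → ℝ) (hv : IsATrans v) (hw : IsATrans w) :
    ∃ c : ℝ, ∀ x ∈ Hb, mk4 (grH v x) (grH w x) + v x * w x = c := by
  refine ⟨Gf v w (bas 0), fun x hx => ?_⟩
  have hxU : x ∈ Ur := Hb_subset_Ur hx
  have h1 : mk4 (grH v x) (grH w x) + v x * w x = Gf v w x := by
    unfold Gf
    rw [mk4_grH_grH]
    have hQ : Qf x = 1 := hx
    rw [hQ, one_mul, Hz_eq_on_Hb hx, Hz_eq_on_Hb hx]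
  rw [h1]
  exact Gf_const hv hw hxU (Hb_subset_Ur bas0_mem_Hb)
end
end

section
/- If α_μ denotes the tautological T-valued asymptotic translation on the unit hyperboloid (so that for each translation v^μ, α_μ v^μ is the corresponding solution of D_a D_b v + v q_ab = 0), and η_{μν} is the Lorentz metric on T, then η^{μν} D_a α_μ D_b α_ν = q_ab. -/
/-
Common extrinsic setup (used in all files).

We work in ℝ⁴ with the Minkowski inner product of signature (+,+,+,-) (CONTEXT 0).
`Hb` is the unit hyperboloid H = {x | ⟨x,x⟩ = 1}, `Ur` the open exterior region
{⟨x,x⟩ > 0} on which fields on H are represented (only their restriction to H matters,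
since every intrinsic operator below first composes with the radial retraction `ret`,
i.e. with the 0-homogeneous extension).

Standard facts about hypersurfaces give the following *definitions* of the intrinsic
(Levi-Civita) operators of the induced metric q on H in terms of ambient derivatives of
the 0-homogeneous extension:
 * the induced metric q at x ∈ H is the restriction of ⟨·,·⟩ to the tangent space
   {u | ⟨x,u⟩ = 0};
 * the intrinsic Hessian D_aD_b f on tangent vectors is the ambient Hessian of the
   0-homogeneous extension (the second-fundamental-form correction vanishes because the
   0-homogeneous extension has radial derivative 0);
 * the intrinsic gradient D^a f is the ambient Minkowski gradient of the 0-homogeneous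
   extension (automatically tangent);
 * the intrinsic Laplacian D² f = q^{ab} D_aD_b f is the ambient wave operator applied
   to the 0-homogeneous extension;
 * the intrinsic divergence D_a V^a of a tangent field is the ambient divergence of its
   0-homogeneous extension.
-/

noncomputable section

open scoped BigOperators

-- linear CLM for mk4 k
def mkCLM (k : E4) : E4 →L[ℝ] ℝ :=
  ∑ i, (sg i * k i) • (ContinuousLinearMap.proj i : E4 →L[ℝ] ℝ)

lemma mkCLM_apply (k u : E4) : mkCLM k u = mk4 k u := by
  simp [mkCLM, mk4, ContinuousLinearMap.sum_apply, mul_assoc]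

lemma hasFDerivAt_mk4 (k x : E4) : HasFDerivAt (fun y => mk4 k y) (mkCLM k) x := by
  have h : (fun y : E4 => mk4 k y) = ⇑(mkCLM k) := by
    funext y; rw [mkCLM_apply]
  rw [h]; exact (mkCLM k).hasFDerivAt

lemma hasFDerivAt_quad (x : E4) :
    HasFDerivAt (fun y => mk4 y y) ((2:ℝ) • mkCLM x) x := by
  have h : ∀ i : Fin 4, HasFDerivAt (fun y : E4 => sg i * y i * y i)
      ((sg i * x i) • (ContinuousLinearMap.proj i : E4 →L[ℝ] ℝ) +
       (sg i * x i) • (ContinuousLinearMap.proj i : E4 →L[ℝ] ℝ)) x := by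
    intro i
    have hp : HasFDerivAt (fun y : E4 => y i)
        (ContinuousLinearMap.proj i : E4 →L[ℝ] ℝ) x :=
      (ContinuousLinearMap.proj i : E4 →L[ℝ] ℝ).hasFDerivAt
    have := ((hp.const_mul (sg i)).mul hp)
    refine this.congr_fderiv ?_
    ext u
    simp [mul_comm, mul_assoc, mul_left_comm]
  have hs := HasFDerivAt.sum (fun i (_ : i ∈ Finset.univ) => h i)
  have heq : (fun y : E4 => mk4 y y) = fun y => ∑ i, sg i * y i * y i := by
    funext y; rfl
  rw [heq]
  refine hs.congr_fderiv (Eq.symm ?_)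
  ext u
  simp [mkCLM, ContinuousLinearMap.sum_apply, Finset.smul_sum]
  exact Finset.sum_congr rfl fun i _ => by ring

lemma Hz_trfn_eq (k : E4) :
    Hz (trfn k) = fun y => (Real.sqrt (mk4 y y))⁻¹ * mk4 k y := by
  funext y
  simp only [Hz, trfn, ret]
  show (∑ i, sg i * k i * ((Real.sqrt (mk4 y y))⁻¹ • y) i) = _
  rw [show mk4 k y = ∑ i, sg i * k i * y i from rfl, Finset.mul_sum]
  exact Finset.sum_congr rfl fun i _ => by
    simp [Pi.smul_apply, smul_eq_mul]; ring

lemma fderiv_Hz (k : E4) {x : E4} (hx : mk4 x x = 1) {u : E4} (hu : mk4 x u = 0) :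
    fderiv ℝ (Hz (trfn k)) x u = mk4 k u := by
  have hs1 : Real.sqrt (mk4 x x) = 1 := by rw [hx, Real.sqrt_one]
  have hg := hasFDerivAt_quad x
  have hs : HasFDerivAt (fun y => Real.sqrt (mk4 y y))
      ((1/(2*Real.sqrt (mk4 x x))) • ((2:ℝ) • mkCLM x)) x :=
    hg.sqrt (by rw [hx]; norm_num)
  have hne : Real.sqrt (mk4 x x) ≠ 0 := by rw [hs1]; norm_num
  have hinv : HasFDerivAt (fun y => (Real.sqrt (mk4 y y))⁻¹)
      ((-(Real.sqrt (mk4 x x) ^ 2)⁻¹) •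
        ((1/(2*Real.sqrt (mk4 x x))) • ((2:ℝ) • mkCLM x))) x :=
    (hasDerivAt_inv hne).comp_hasFDerivAt x hs
  have hmul := hinv.mul (hasFDerivAt_mk4 k x)
  rw [Hz_trfn_eq k, show (fun y => (Real.sqrt (mk4 y y))⁻¹ * mk4 k y) =
    ((fun y => (Real.sqrt (mk4 y y))⁻¹) * fun y => mk4 k y) from rfl, hmul.fderiv]
  simp [mkCLM_apply, hs1, hu]

open Matrix in
def Kmat (k : Fin 4 → E4) : Matrix (Fin 4) (Fin 4) ℝ := Matrix.of fun i j => k i j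
def Gmat : Matrix (Fin 4) (Fin 4) ℝ := Matrix.diagonal sg

open Matrix

lemma GG : Gmat * Gmat = 1 := by
  rw [Gmat, Matrix.diagonal_mul_diagonal]
  have : (fun i => sg i * sg i) = fun _ : Fin 4 => (1:ℝ) := by
    funext i; simp [sg]; split_ifs <;> norm_num
  rw [this, Matrix.diagonal_one]

lemma matrix_key (k : Fin 4 → E4) (η : Matrix (Fin 4) (Fin 4) ℝ)
    (hη : ∀ i j, η i j = mk4 (k i) (k j)) (hdet : IsUnit η.det) (u w : E4) :
    ∑ i, ∑ j, η⁻¹ i j * mk4 (k i) u * mk4 (k j) w = mk4 u w := by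
  set K := Kmat k with hK
  set G := Gmat with hG
  have hηK : η = K * G * Kᵀ := by
    ext i j
    rw [hη]
    show (∑ l, sg l * k i l * k j l) = _
    simp only [Matrix.mul_apply, Matrix.transpose_apply, hK, hG, Gmat, Kmat, Matrix.of_apply,
      Matrix.diagonal_apply, mul_ite, ite_mul, mul_zero, zero_mul, Finset.sum_ite_eq,
      Finset.sum_ite_eq', Finset.mem_univ, if_pos]
    exact Finset.sum_congr rfl fun l _ => by ring
  have hdK : IsUnit K.det := by
    have hd : η.det = K.det * G.det * K.det := by
      rw [hηK, Matrix.det_mul, Matrix.det_mul, Matrix.det_transpose]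
    rw [isUnit_iff_ne_zero] at hdet ⊢
    intro h; apply hdet; rw [hd, h]; ring
  have hdKT : IsUnit Kᵀ.det := by rwa [Matrix.det_transpose]
  have hGinv : G⁻¹ = G := Matrix.inv_eq_right_inv GG
  have hηinv : η⁻¹ = Kᵀ⁻¹ * G * K⁻¹ := by
    rw [hηK, Matrix.mul_inv_rev, Matrix.mul_inv_rev, hGinv, Matrix.mul_assoc]
  have hM : (K * G)ᵀ * η⁻¹ * (K * G) = G := by
    rw [hηinv, Matrix.transpose_mul, show Gᵀ = G by rw [hG, Gmat, Matrix.diagonal_transpose]]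
    simp only [Matrix.mul_assoc]
    rw [Matrix.mul_nonsing_inv_cancel_left _ _ hdKT, Matrix.nonsing_inv_mul_cancel_left _ _ hdK,
      ← Matrix.mul_assoc, GG, Matrix.one_mul]
  have ha : ∀ v : E4, ∀ i, mk4 (k i) v = ((K * G) *ᵥ v) i := by
    intro v i
    show (∑ l, sg l * k i l * v l) = _
    simp only [Matrix.mulVec, dotProduct, Matrix.mul_apply, hK, hG, Gmat, Kmat,
      Matrix.of_apply, Matrix.diagonal_apply, mul_ite, ite_mul, mul_zero, zero_mul,
      Finset.sum_ite_eq, Finset.sum_ite_eq', Finset.mem_univ, if_pos]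
    exact Finset.sum_congr rfl fun l _ => by ring
  calc ∑ i, ∑ j, η⁻¹ i j * mk4 (k i) u * mk4 (k j) w
      = ∑ i, ∑ j, η⁻¹ i j * ((K * G) *ᵥ u) i * ((K * G) *ᵥ w) j := by
        refine Finset.sum_congr rfl fun i _ => Finset.sum_congr rfl fun j _ => ?_
        rw [ha u i, ha w j]
    _ = ((K * G) *ᵥ u) ⬝ᵥ (η⁻¹ *ᵥ ((K * G) *ᵥ w)) := by
        generalize (K * G) *ᵥ u = a
        generalize (K * G) *ᵥ w = b
        simp only [dotProduct, Matrix.mulVec, Finset.mul_sum]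
        exact Finset.sum_congr rfl fun i _ => Finset.sum_congr rfl fun j _ => by ring
    _ = u ⬝ᵥ (((K * G)ᵀ * η⁻¹ * (K * G)) *ᵥ w) := by
        conv_rhs => rw [Matrix.mul_assoc, ← Matrix.mulVec_mulVec, ← Matrix.mulVec_mulVec,
          Matrix.dotProduct_mulVec, Matrix.vecMul_transpose]
    _ = u ⬝ᵥ (G *ᵥ w) := by rw [hM]
    _ = mk4 u w := by
        simp only [dotProduct, Matrix.mulVec_diagonal, hG, Gmat]
        rw [show mk4 u w = ∑ i, sg i * u i * w i from rfl]
        exact Finset.sum_congr rfl fun i _ => by ring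

/-
STATEMENT 3: For a basis (k 0,...,k 3) of ℝ⁴ ≅ T with (invertible) Gram matrix η,
η^{μν} D_a α_μ D_b α_ν = q_ab at every point of H: evaluated on arbitrary tangent
vectors u, w, the inverse-Gram-weighted sum of products of the differentials of the
translations v_{k i} equals the induced metric ⟨u,w⟩.
-/
theorem stmt3 (k : Fin 4 → E4) (η : Matrix (Fin 4) (Fin 4) ℝ)
    (hη : ∀ i j, η i j = mk4 (k i) (k j)) (hdet : IsUnit η.det) :
    ∀ x ∈ Hb, ∀ u w : E4, Tang x u → Tang x w →
      (∑ i, ∑ j, η⁻¹ i j * fderiv ℝ (Hz (trfn (k i))) x u *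
        fderiv ℝ (Hz (trfn (k j))) x w) = mk4 u w := by
  intro x hx u w hu hw
  have e : ∀ (m : Fin 4) (v : E4), mk4 x v = 0 →
      fderiv ℝ (Hz (trfn (k m))) x v = mk4 (k m) v := fun m v hv => fderiv_Hz (k m) hx hv
  rw [show (∑ i, ∑ j, η⁻¹ i j * fderiv ℝ (Hz (trfn (k i))) x u *
        fderiv ℝ (Hz (trfn (k j))) x w)
      = ∑ i, ∑ j, η⁻¹ i j * mk4 (k i) u * mk4 (k j) w from
    Finset.sum_congr rfl fun i _ => Finset.sum_congr rfl fun j _ => by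
      rw [e i u hu, e j w hw]]
  exact matrix_key k η hη hdet u w
end
end
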